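/- For every s ≥ 1 and every petal graph Pe_n, the hat guessing game with hatness s+1 at the stem, hatness 4s(s+1)−1 at all path vertices, and s guesses at every vertex, is losing. Consequently HG_s(Pe_n) ≤ 4s(s+1)−2 for all n. -/
import Mathlib


/-- A winning strategy in the hat guessing game `⟨G, h, g⟩`: each sage `v` deterministically
outputs at most `g v` guesses depending only on the hat colors of its neighbors, and for
every hat assignment (with `c v < h v`) some sage's guess set contains its own color. -/
def HatWinning {V : Type*} (G : SimpleGraph V) (h g : V → ℕ) : Prop :=
  ∃ σ : V → (V → ℕ) → Finset ℕ,
    (∀ v c c', (∀ u, G.Adj v u → c u = c' u) → σ v c = σ v c') ∧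
    (∀ v c, (σ v c).card ≤ g v) ∧
    ∀ c : V → ℕ, (∀ v, c v < h v) → ∃ v, c v ∈ σ v c

/-- The hat guessing game played by the sages occupying the vertices of `S` only
(the game on the induced subgraph `G[S]`). -/
def HatWinningOn {V : Type*} (G : SimpleGraph V) (S : Set V) (h g : V → ℕ) : Prop :=
  ∃ σ : V → (V → ℕ) → Finset ℕ,
    (∀ v ∈ S, ∀ c c', (∀ u ∈ S, G.Adj v u → c u = c' u) → σ v c = σ v c') ∧
    (∀ v ∈ S, ∀ c, (σ v c).card ≤ g v) ∧
    ∀ c : V → ℕ, (∀ v ∈ S, c v < h v) → ∃ v ∈ S, c v ∈ σ v c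

/-- The petal graph `Pe_n`: the path on `Fin n` together with a stem (`none`) adjacent to
every path vertex. -/
def petal (n : ℕ) : SimpleGraph (Option (Fin n)) :=
  SimpleGraph.fromRel (fun x y =>
    x = none ∨ ∃ i j : Fin n, x = some i ∧ y = some j ∧ (i : ℕ) + 1 = (j : ℕ))

lemma path_adversary (g n : ℕ) (hg : 1 ≤ g) (Γ : ℕ → (ℕ → ℕ) → Finset ℕ)
    (hΓcard : ∀ j c, (Γ j c).card ≤ g)
    (hΓloc : ∀ j (c c' : ℕ → ℕ), (∀ k, k < n → (k + 1 = j ∨ j + 1 = k) → c k = c' k) →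
      Γ j c = Γ j c') :
    ∃ c : ℕ → ℕ, (∀ k, c k < 4 * g - 1) ∧ ∀ j < n, c j ∉ Γ j c := by
  have main : ∀ i, ∃ (c : ℕ → ℕ) (C : Finset ℕ),
      (∀ k, c k < 4 * g - 1) ∧ C ⊆ Finset.range (4 * g - 1) ∧ 2 * g ≤ C.card ∧
      ∀ x ∈ C, ∀ j < i, c j ∉ Γ j (fun k => if k = i then x else c k) := by
    intro i
    induction i with
    | zero =>
      exact ⟨fun _ => 0, Finset.range (4 * g - 1), fun k => by show (0:ℕ) < 4 * g - 1; omega, Finset.Subset.refl _,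
        by rw [Finset.card_range]; omega, fun x _ j hj => by omega⟩
    | succ i ih =>
      obtain ⟨c, C, hc, hCsub, hCcard, hinv⟩ := ih
      set Bad : ℕ → Finset ℕ := fun x =>
        (Finset.range (4 * g - 1)).filter
          (fun y => x ∈ Γ i (fun k => if k = i + 1 then y else c k)) with hBad
      have key : ∃ x ∈ C, (Bad x).card < 2 * g := by
        by_contra hcon
        push_neg at hcon
        have h1 : 2 * g * (2 * g) ≤ ∑ x ∈ C, (Bad x).card :=
          calc 2 * g * (2 * g) ≤ 2 * g * C.card := Nat.mul_le_mul_left _ hCcard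
            _ = ∑ _x ∈ C, 2 * g := by rw [Finset.sum_const, smul_eq_mul, mul_comm]
            _ ≤ ∑ x ∈ C, (Bad x).card := Finset.sum_le_sum fun x hx => hcon x hx
        have h2 : ∑ x ∈ C, (Bad x).card ≤ (4 * g - 1) * g := by
          have hswap : ∑ x ∈ C, (Bad x).card =
              ∑ y ∈ Finset.range (4 * g - 1),
                (C.filter (fun x => x ∈ Γ i (fun k => if k = i + 1 then y else c k))).card := by
            simp only [hBad, Finset.card_filter]
            exact Finset.sum_comm
          rw [hswap]
          calc ∑ y ∈ Finset.range (4 * g - 1),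
                (C.filter (fun x => x ∈ Γ i (fun k => if k = i + 1 then y else c k))).card
              ≤ ∑ _y ∈ Finset.range (4 * g - 1), g :=
                Finset.sum_le_sum (fun y _ => le_trans
                  (Finset.card_le_card (fun x hx => (Finset.mem_filter.mp hx).2)) (hΓcard _ _))
            _ = (4 * g - 1) * g := by
                rw [Finset.sum_const, smul_eq_mul, Finset.card_range]
        obtain ⟨m, hm⟩ : ∃ m, 4 * g - 1 = m := ⟨_, rfl⟩
        have hm1 : m + 1 = 4 * g := by omega
        rw [hm] at h2
        have h3 : (m + 1) * g = 4 * g * g := by rw [hm1]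
        rw [add_mul, one_mul, mul_assoc] at h3
        have h4 : 2 * g * (2 * g) = 4 * (g * g) := by ring
        linarith
      obtain ⟨x, hxC, hBadx⟩ := key
      have hxH : x < 4 * g - 1 := Finset.mem_range.mp (hCsub hxC)
      refine ⟨fun k => if k = i then x else c k, Finset.range (4 * g - 1) \ Bad x, ?_,
        Finset.sdiff_subset, ?_, ?_⟩
      · intro k; dsimp only; split
        · exact hxH
        · exact hc k
      · have hsplit := Finset.card_le_card_sdiff_add_card (s := Finset.range (4 * g - 1)) (t := Bad x)
        rw [Finset.card_range] at hsplit
        omega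
      · intro y hy j hj
        obtain ⟨hyH, hyB⟩ := Finset.mem_sdiff.mp hy
        have hyH' : y < 4 * g - 1 := Finset.mem_range.mp hyH
        rcases Nat.lt_succ_iff_lt_or_eq.mp hj with hj' | hj2
        · have h0 := hinv x hxC j hj'
          have heq : Γ j (fun k => if k = i + 1 then y else if k = i then x else c k)
              = Γ j (fun k => if k = i then x else c k) := by
            apply hΓloc
            intro k _ hk
            have hki : k ≠ i + 1 := by omega
            simp only [if_neg hki]
          show (if j = i then x else c j) ∉
            Γ j (fun k => if k = i + 1 then y else if k = i then x else c k)
          rw [if_neg (show j ≠ i by omega), heq]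
          exact h0
        · subst hj2
          have hnB : x ∉ Γ j (fun k => if k = j + 1 then y else c k) := by
            intro hmem
            apply hyB
            simp only [hBad, Finset.mem_filter]
            exact ⟨hyH, hmem⟩
          have heq : Γ j (fun k => if k = j + 1 then y else if k = j then x else c k)
              = Γ j (fun k => if k = j + 1 then y else c k) := by
            apply hΓloc
            intro k _ hk
            by_cases hk1 : k = j + 1
            · simp only [if_pos hk1]
            · have hki : k ≠ j := by omega
              simp only [if_neg hk1, if_neg hki]
          show (if j = j then x else c j) ∉
            Γ j (fun k => if k = j + 1 then y else if k = j then x else c k)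
          rw [if_pos rfl, heq]
          exact hnB
  obtain ⟨c, C, hc, hCsub, hCcard, hinv⟩ := main n
  obtain ⟨x, hx⟩ := Finset.card_pos.mp (show 0 < C.card by omega)
  refine ⟨c, hc, fun j hj => ?_⟩
  have h0 := hinv x hx j hj
  have heq : Γ j (fun k => if k = n then x else c k) = Γ j c := by
    apply hΓloc
    intro k hk _
    rw [if_neg (by omega)]
  rw [heq] at h0
  exact h0

/-- For every petal `Pe_n` the game with hatness `s+1` at the stem,
hatness `4s(s+1)-1` at the path vertices, and `s` guesses everywhere, is losing.
Consequently `HG_s(Pe_n) ≤ 4s(s+1)-2`. -/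
theorem petal_losing (s : ℕ) (hs : 1 ≤ s) (n : ℕ) :
    (¬ HatWinning (petal n)
        (fun x => match x with | none => s + 1 | some _ => 4 * s * (s + 1) - 1)
        (fun _ => s)) ∧
    (∀ k, HatWinning (petal n) (fun _ => k) (fun _ => s) → k ≤ 4 * s * (s + 1) - 2) := by
  have hg : 1 ≤ s * (s + 1) := Nat.one_le_iff_ne_zero.mpr (by positivity)
  have hmm : 4 * s * (s + 1) = 4 * (s * (s + 1)) := mul_assoc 4 s (s + 1)
  have adjS : ∀ (j k : Fin n), (petal n).Adj (some j) (some k) →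
      ((k : ℕ) + 1 = (j : ℕ) ∨ (j : ℕ) + 1 = (k : ℕ)) := by
    intro j k h
    rw [petal, SimpleGraph.fromRel_adj] at h
    obtain ⟨-, h | h⟩ := h
    · rcases h with h | ⟨a, b, ha, hb, hab⟩
      · exact absurd h (by simp)
      · right
        obtain rfl : j = a := Option.some_injective _ ha
        obtain rfl : k = b := Option.some_injective _ hb
        exact hab
    · rcases h with h | ⟨a, b, ha, hb, hab⟩
      · exact absurd h (by simp)
      · left
        obtain rfl : k = a := Option.some_injective _ ha
        obtain rfl : j = b := Option.some_injective _ hb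
        exact hab
  have part1 : ¬ HatWinning (petal n)
      (fun x => match x with | none => s + 1 | some _ => 4 * s * (s + 1) - 1)
      (fun _ => s) := by
    rintro ⟨σ, hloc, hcard, hwin⟩
    obtain ⟨c, hc, hfool⟩ := path_adversary (s * (s + 1)) n hg
      (fun j cc => if h : j < n then (Finset.range (s + 1)).biUnion
        (fun a => σ (some ⟨j, h⟩) (fun v => v.elim a (fun k => cc (k : ℕ)))) else ∅)
      (by
        intro j cc
        show (if h : j < n then (Finset.range (s + 1)).biUnion
            (fun a => σ (some ⟨j, h⟩) (fun v => v.elim a (fun k => cc (k : ℕ)))) else ∅).card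
          ≤ s * (s + 1)
        by_cases h : j < n
        · rw [dif_pos h]
          calc ((Finset.range (s + 1)).biUnion
                (fun a => σ (some ⟨j, h⟩) (fun v => v.elim a (fun k => cc (k : ℕ))))).card
              ≤ ∑ a ∈ Finset.range (s + 1),
                  (σ (some ⟨j, h⟩) (fun v => v.elim a (fun k => cc (k : ℕ)))).card :=
              Finset.card_biUnion_le
            _ ≤ ∑ _a ∈ Finset.range (s + 1), s :=
              Finset.sum_le_sum (fun a _ => hcard _ _)
            _ = (s + 1) * s := by rw [Finset.sum_const, smul_eq_mul, Finset.card_range]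
            _ = s * (s + 1) := mul_comm _ _
        · rw [dif_neg h]; simp)
      (by
        intro j c1 c2 hagree
        show (if h : j < n then (Finset.range (s + 1)).biUnion
            (fun a => σ (some ⟨j, h⟩) (fun v => v.elim a (fun k => c1 (k : ℕ)))) else ∅)
          = (if h : j < n then (Finset.range (s + 1)).biUnion
            (fun a => σ (some ⟨j, h⟩) (fun v => v.elim a (fun k => c2 (k : ℕ)))) else ∅)
        by_cases h : j < n
        · rw [dif_pos h, dif_pos h]
          apply Finset.biUnion_congr rfl
          intro a _
          apply hloc
          intro u hu
          cases u with
          | none => rfl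
          | some k => exact hagree (k : ℕ) k.isLt (adjS _ k hu)
        · rw [dif_neg h, dif_neg h])
    have hScard : (σ none (fun v => v.elim 0 (fun k => c (k : ℕ)))).card ≤ s :=
      hcard none (fun v => v.elim 0 (fun k => c (k : ℕ)))
    have hstem : ∃ a, a < s + 1 ∧ a ∉ σ none (fun v => v.elim 0 (fun k => c (k : ℕ))) := by
      by_contra h
      push_neg at h
      have hsub : Finset.range (s + 1) ⊆ σ none (fun v => v.elim 0 (fun k => c (k : ℕ))) :=
        fun a ha => h a (Finset.mem_range.mp ha)
      have h2 := Finset.card_le_card hsub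
      rw [Finset.card_range] at h2
      omega
    obtain ⟨a, ha, haS⟩ := hstem
    obtain ⟨v, hv⟩ := hwin (fun u => u.elim a (fun k => c (k : ℕ))) (by
      intro v
      cases v with
      | none => exact ha
      | some k =>
        show c (k : ℕ) < 4 * s * (s + 1) - 1
        rw [hmm]
        exact hc k)
    cases v with
    | none =>
      apply haS
      have heq : σ none (fun u => u.elim a (fun k => c (k : ℕ)))
          = σ none (fun u => u.elim 0 (fun k => c (k : ℕ))) := by
        apply hloc
        intro u hu
        cases u with
        | none => exact absurd hu (petal n).irrefl
        | some k => rfl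
      rw [heq] at hv
      exact hv
    | some j =>
      have h1 := hfool (j : ℕ) j.isLt
      apply h1
      show c (j : ℕ) ∈ dite ((j : ℕ) < n)
        (fun h => (Finset.range (s + 1)).biUnion
          (fun a' => σ (some ⟨(j : ℕ), h⟩) (fun v => v.elim a' (fun k => c (k : ℕ)))))
        (fun _ => ∅)
      rw [dif_pos j.isLt]
      apply Finset.mem_biUnion.mpr
      exact ⟨a, Finset.mem_range.mpr ha, hv⟩
  refine ⟨part1, fun k hk => ?_⟩
  by_contra hlt
  push_neg at hlt
  apply part1
  obtain ⟨σ, h1, h2, h3⟩ := hk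
  have hb : s + 2 ≤ 4 * s * (s + 1) := by nlinarith
  have hkey : ∀ v : Option (Fin n),
      (match v with | none => s + 1 | some _ => 4 * s * (s + 1) - 1) ≤ k := by
    obtain ⟨m, hm⟩ : ∃ m, 4 * s * (s + 1) = m := ⟨_, rfl⟩
    rw [hm] at hlt hb
    intro v
    cases v with
    | none => show s + 1 ≤ k; omega
    | some _ => show 4 * s * (s + 1) - 1 ≤ k; rw [hm]; omega
  exact ⟨σ, h1, h2, fun c hc => h3 c fun v => lt_of_lt_of_le (hc v) (hkey v)⟩
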